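/- The pairing β : A ⊗_R A → R defined by β = ε ∘ μ is a perfect pairing: its Gram matrix in the basis (v₊, v₋) is [[0, 1],[XZ, 0]], which is invertible over R; consequently A is self-dual as an R-module via β. -/
import Mathlib


open Matrix

def vplus (R : Type*) [CommRing R] : R × R := (1, 0)

def vminus (R : Type*) [CommRing R] : R × R := (0, 1)

/-- The pairing `β = ε ∘ μ` on `A = R·v₊ ⊕ R·v₋` as an `R`-bilinear map, where
`μ(v₊,v₊)=v₊`, `μ(v₊,v₋)=v₋`, `μ(v₋,v₊)=XZ v₋`, `μ(v₋,v₋)=0` and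
`ε(v₊)=0`, `ε(v₋)=1`; explicitly `β(p,q) = p₁q₂ + XZ·p₂q₁`. -/
noncomputable def betaBil (R : Type*) [CommRing R] (X Z : Rˣ) :
    (R × R) →ₗ[R] (R × R) →ₗ[R] R :=
  LinearMap.mk₂ R (fun p q => p.1 * q.2 + (X : R) * (Z : R) * (p.2 * q.1))
    (fun m₁ m₂ n => by simp; ring)
    (fun c m n => by simp [smul_eq_mul]; ring)
    (fun m n₁ n₂ => by simp; ring)
    (fun c m n => by simp [smul_eq_mul]; ring)

/-- `β = ε ∘ μ` is a perfect pairing: its Gram matrix in the basis `(v₊,v₋)` is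
`[[0,1],[XZ,0]]`, whose determinant is a unit of `R`, and `A` is self-dual via
`β`, i.e. `p ↦ β(p,·)` is a bijection from `A` onto its dual. -/
theorem beta_perfect_pairing {R : Type*} [CommRing R] (X Y Z : Rˣ)
    (hX : X ^ 2 = 1) (hY : Y ^ 2 = 1) :
    betaBil R X Z (vplus R) (vplus R) = 0 ∧
    betaBil R X Z (vplus R) (vminus R) = 1 ∧
    betaBil R X Z (vminus R) (vplus R) = (X : R) * (Z : R) ∧
    betaBil R X Z (vminus R) (vminus R) = 0 ∧
    IsUnit (Matrix.det !![(0 : R), 1; (X : R) * (Z : R), 0]) ∧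
    Function.Bijective (fun p : R × R => betaBil R X Z p) := by
  refine ⟨by simp [betaBil, vplus, vminus], by simp [betaBil, vplus, vminus],
    by simp [betaBil, vplus, vminus], by simp [betaBil, vplus, vminus], ?_, ?_, ?_⟩
  · have : Matrix.det !![(0 : R), 1; (X : R) * (Z : R), 0] = -((X : R) * Z) := by
      simp [Matrix.det_fin_two_of]
    rw [this]
    exact ((X * Z).isUnit.neg)
  · -- injective
    intro p q h
    have h1 := congrArg (fun f => f (vplus R)) h
    have h2 := congrArg (fun f => f (vminus R)) h
    simp [betaBil, vplus, vminus] at h1 h2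
    have hp2 : p.2 = q.2 := by
      have hu : IsUnit ((X : R) * Z) := (X * Z).isUnit
      exact hu.mul_left_cancel h1
    exact Prod.ext h2 hp2
  · -- surjective
    intro f
    refine ⟨(f (vminus R), ((X * Z)⁻¹ : Rˣ) * f (vplus R)), ?_⟩
    apply LinearMap.ext; intro q
    have hq : q = q.1 • vplus R + q.2 • vminus R := by
      simp [vplus, vminus, Prod.ext_iff]
    conv_rhs => rw [hq]
    have hone : (X : R) * (Z : R) * (((X * Z)⁻¹ : Rˣ) : R) = 1 := by
      have := Units.mul_inv (X * Z)
      rwa [Units.val_mul] at this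
    simp only [betaBil, vplus, vminus, LinearMap.mk₂_apply, map_add, _root_.map_smul,
      smul_eq_mul]
    linear_combination q.1 * f (1, 0) * hone
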